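/- arXiv:2601.05856 — 2 statements merged into one kernel-verified Lean document; each statement's English description precedes it below -/
import Mathlib

section
/- For every n ≥ 2, the cardinality of F_r, the set of n-queens configurations fixed by the 90° rotation r, equals 2 times the number of orbits of the D₄-action contained in F_r; in particular every D₄-orbit of a configuration in F_r has exactly 2 elements and 2 divides |F_r|. -/
open scoped Classical

/-- The `n × n` board, with squares indexed by `[n] × [n]` where `[n] = {1, …, n}`. -/
def board (n : ℕ) : Finset (ℕ × ℕ) := Finset.Icc 1 n ×ˢ Finset.Icc 1 n

/-- `Q` is an `n`-queens configuration: `Q ⊆ [n] × [n]`, `|Q| = n`, and every row,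
column, diagonal (`j - i + n = k`) and anti-diagonal (`i + j - 1 = k`) contains at
most one element of `Q`. -/
def IsQueensConfig (n : ℕ) (Q : Finset (ℕ × ℕ)) : Prop :=
  Q ⊆ board n ∧ Q.card = n ∧
  (∀ p ∈ Q, ∀ q ∈ Q, p.1 = q.1 → p = q) ∧
  (∀ p ∈ Q, ∀ q ∈ Q, p.2 = q.2 → p = q) ∧
  (∀ p ∈ Q, ∀ q ∈ Q, p.2 + n - p.1 = q.2 + n - q.1 → p = q) ∧
  (∀ p ∈ Q, ∀ q ∈ Q, p.1 + p.2 - 1 = q.1 + q.2 - 1 → p = q)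

/-- `Q(n)`: the number of `n`-queens configurations. -/
noncomputable def queensCount (n : ℕ) : ℕ :=
  ((board n).powerset.filter (fun Q => IsQueensConfig n Q)).card

/-- The vertical reflection `s`, `sQ = {(i, n+1-j) : (i,j) ∈ Q}`. -/
def sAct (n : ℕ) (Q : Finset (ℕ × ℕ)) : Finset (ℕ × ℕ) :=
  Q.image (fun p => (p.1, n + 1 - p.2))

/-- The 90° counter-clockwise rotation `r`, `rQ = {(n+1-j, i) : (i,j) ∈ Q}`. -/
def rAct (n : ℕ) (Q : Finset (ℕ × ℕ)) : Finset (ℕ × ℕ) :=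
  Q.image (fun p => (n + 1 - p.2, p.1))

/-- The dihedral group `D₄ = {r^k s^b : k ∈ Fin 4, b ∈ Bool}` acting on subsets of the
board; the element `(k, b)` acts by `Q ↦ r^k (s^b Q)` (rightmost map applied first). -/
def d4Act (n : ℕ) (x : Fin 4 × Bool) (Q : Finset (ℕ × ℕ)) : Finset (ℕ × ℕ) :=
  (rAct n)^[(x.1 : ℕ)] (if x.2 then sAct n Q else Q)

/-- The `D₄`-orbit of `Q`, i.e. `{xQ : x ∈ D₄}`. -/
def d4Orbit (n : ℕ) (Q : Finset (ℕ × ℕ)) : Finset (Finset (ℕ × ℕ)) :=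
  Finset.univ.image (fun x : Fin 4 × Bool => d4Act n x Q)

/-- `F_r`: the set of `n`-queens configurations fixed by the rotation `r`. -/
noncomputable def Fr (n : ℕ) : Finset (Finset (ℕ × ℕ)) :=
  (board n).powerset.filter (fun Q => IsQueensConfig n Q ∧ rAct n Q = Q)

/-- `F_{r² ∖ r}`: the `n`-queens configurations fixed by `r²` but not by `r`. -/
noncomputable def Fr2 (n : ℕ) : Finset (Finset (ℕ × ℕ)) :=
  (board n).powerset.filter
    (fun Q => IsQueensConfig n Q ∧ rAct n (rAct n Q) = Q ∧ rAct n Q ≠ Q)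

/-- `F_e`: the `n`-queens configurations fixed by no non-identity element of `D₄`. -/
noncomputable def Fe (n : ℕ) : Finset (Finset (ℕ × ℕ)) :=
  (board n).powerset.filter
    (fun Q => IsQueensConfig n Q ∧
      ∀ x : Fin 4 × Bool, x ≠ ((0 : Fin 4), false) → d4Act n x Q ≠ Q)

lemma mem_board' {n : ℕ} {p : ℕ × ℕ} (h : p ∈ board n) :
    1 ≤ p.1 ∧ p.1 ≤ n ∧ 1 ≤ p.2 ∧ p.2 ≤ n := by
  simp only [board, Finset.mem_product, Finset.mem_Icc] at h
  tauto

lemma mem_Fr {n : ℕ} {Q : Finset (ℕ × ℕ)} :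
    Q ∈ Fr n ↔ IsQueensConfig n Q ∧ rAct n Q = Q := by
  simp only [Fr, Finset.mem_filter, Finset.mem_powerset, and_iff_right_iff_imp]
  exact fun h => h.1.1

lemma s_involutive {n : ℕ} {Q : Finset (ℕ × ℕ)} (hQ : Q ⊆ board n) :
    sAct n (sAct n Q) = Q := by
  rw [sAct, sAct, Finset.image_image]
  have : Q.image ((fun p : ℕ × ℕ => (p.1, n + 1 - p.2)) ∘
      (fun p : ℕ × ℕ => (p.1, n + 1 - p.2))) = Q.image id := by
    apply Finset.image_congr
    intro p hp
    obtain ⟨h1, h2, h3, h4⟩ := mem_board' (hQ hp)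
    simp only [Function.comp, id]
    ext <;> simp <;> omega
  rw [this, Finset.image_id]

lemma rs_eq {n : ℕ} {Q : Finset (ℕ × ℕ)} (hQ : Q ⊆ board n) (hr : rAct n Q = Q) :
    rAct n (sAct n Q) = sAct n Q := by
  have h1 : rAct n (sAct n Q) = Q.image (fun p => (p.2, p.1)) := by
    rw [sAct, rAct, Finset.image_image]
    apply Finset.image_congr
    intro p hp
    obtain ⟨_, _, h3, h4⟩ := mem_board' (hQ hp)
    simp only [Function.comp]
    ext <;> simp <;> omega
  have h2 : Q.image (fun p : ℕ × ℕ => (p.2, p.1)) = sAct n Q := by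
    conv_lhs => rw [← hr]
    rw [rAct, Finset.image_image, sAct]
    rfl
  rw [h1, h2]

lemma s_config {n : ℕ} {Q : Finset (ℕ × ℕ)} (h : IsQueensConfig n Q) :
    IsQueensConfig n (sAct n Q) := by
  obtain ⟨hb, hc, hrow, hcol, hdiag, hanti⟩ := h
  have hext : ∀ p' ∈ sAct n Q, ∃ p ∈ Q, 1 ≤ p.1 ∧ p.1 ≤ n ∧ 1 ≤ p.2 ∧ p.2 ≤ n ∧
      p' = (p.1, n + 1 - p.2) := by
    intro p' hp'
    obtain ⟨p, hp, rfl⟩ := Finset.mem_image.mp hp'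
    obtain ⟨h1, h2, h3, h4⟩ := mem_board' (hb hp)
    exact ⟨p, hp, h1, h2, h3, h4, rfl⟩
  refine ⟨?_, ?_, ?_, ?_, ?_, ?_⟩
  · intro p' hp'
    obtain ⟨p, hp, h1, h2, h3, h4, rfl⟩ := hext p' hp'
    simp only [board, Finset.mem_product, Finset.mem_Icc]
    omega
  · rw [sAct, Finset.card_image_of_injOn, hc]
    intro p hp q hq hpq
    obtain ⟨_, _, h3, h4⟩ := mem_board' (hb hp)
    obtain ⟨_, _, h3', h4'⟩ := mem_board' (hb hq)
    simp only [Prod.mk.injEq] at hpq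
    have : p.2 = q.2 := by omega
    exact Prod.ext hpq.1 this
  all_goals {
    intro p' hp' q' hq' heq
    obtain ⟨p, hp, h1, h2, h3, h4, rfl⟩ := hext p' hp'
    obtain ⟨q, hq, h1', h2', h3', h4', rfl⟩ := hext q' hq'
    simp only at heq
    first
    | (have hpq : p = q := hrow p hp q hq heq; rw [hpq])
    | (have hpq : p = q := hcol p hp q hq (by omega); rw [hpq])
    | (have hpq : p = q := hanti p hp q hq (by omega); rw [hpq])
    | (have hpq : p = q := hdiag p hp q hq (by omega); rw [hpq])
  }

lemma s_ne {n : ℕ} {Q : Finset (ℕ × ℕ)} (hn : 2 ≤ n) (h : IsQueensConfig n Q) :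
    sAct n Q ≠ Q := by
  intro he
  obtain ⟨hb, hc, hrow, hcol, hdiag, hanti⟩ := h
  obtain ⟨p, hp, q, hq, hpq⟩ := Finset.one_lt_card.mp (by omega : 1 < Q.card)
  have hmid : ∀ x ∈ Q, 2 * x.2 = n + 1 := by
    intro x hx
    have hx' : (x.1, n + 1 - x.2) ∈ Q := by
      rw [← he]; exact Finset.mem_image_of_mem _ hx
    have heq := hrow x hx (x.1, n + 1 - x.2) hx' rfl
    obtain ⟨_, _, h3, h4⟩ := mem_board' (hb hx)
    have := congrArg Prod.snd heq
    simp only at this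
    omega
  have := hcol p hp q hq (by have := hmid p hp; have := hmid q hq; omega)
  exact hpq this

lemma orbit_eq {n : ℕ} {Q : Finset (ℕ × ℕ)} (hr : rAct n Q = Q)
    (hrs : rAct n (sAct n Q) = sAct n Q) :
    d4Orbit n Q = {Q, sAct n Q} := by
  ext R
  simp only [d4Orbit, Finset.mem_image, Finset.mem_univ, true_and, Finset.mem_insert,
    Finset.mem_singleton]
  constructor
  · rintro ⟨⟨k, b⟩, rfl⟩
    cases b
    · left
      simp [d4Act, Function.iterate_fixed hr]
    · right
      simp [d4Act, Function.iterate_fixed hrs]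
  · rintro (rfl | rfl)
    · exact ⟨(0, false), by simp [d4Act]⟩
    · exact ⟨(0, true), by simp [d4Act]⟩

/-- For `n ≥ 2`, the cardinality of `F_r` equals twice the number of `D₄`-orbits
contained in `F_r`; every `D₄`-orbit of a configuration in `F_r` has exactly two
elements, and `2` divides the cardinality of `F_r`. -/
theorem Fr_card_eq_two_mul_orbits (n : ℕ) (hn : 2 ≤ n) :
    (Fr n).card = 2 * ((Fr n).image (fun Q => d4Orbit n Q)).card ∧
    (∀ Q ∈ Fr n, (d4Orbit n Q).card = 2) ∧
    2 ∣ (Fr n).card := by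
  have hkey : ∀ Q ∈ Fr n, (sAct n Q ∈ Fr n) ∧ sAct n Q ≠ Q ∧
      d4Orbit n Q = {Q, sAct n Q} ∧ d4Orbit n (sAct n Q) = {Q, sAct n Q} := by
    intro Q hQ
    rw [mem_Fr] at hQ
    obtain ⟨hcfg, hr⟩ := hQ
    have hrs := rs_eq hcfg.1 hr
    have hscfg := s_config hcfg
    have hss := s_involutive hcfg.1
    refine ⟨mem_Fr.mpr ⟨hscfg, hrs⟩, s_ne hn hcfg, orbit_eq hr hrs, ?_⟩
    rw [orbit_eq hrs (by rw [hss]; exact hr), hss]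
    exact Finset.pair_comm _ _
  have hcard2 : ∀ Q ∈ Fr n, (d4Orbit n Q).card = 2 := by
    intro Q hQ
    obtain ⟨_, hne, ho, _⟩ := hkey Q hQ
    rw [ho, Finset.card_insert_of_notMem (by simpa using hne.symm),
      Finset.card_singleton]
  have fiber_eq : ∀ Q ∈ Fr n,
      (Fr n).filter (fun R => d4Orbit n R = d4Orbit n Q) = {Q, sAct n Q} := by
    intro Q hQ
    obtain ⟨hs, hne, ho, hos⟩ := hkey Q hQ
    ext R
    simp only [Finset.mem_filter, Finset.mem_insert, Finset.mem_singleton]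
    constructor
    · rintro ⟨hR, hRQ⟩
      have hself : R ∈ d4Orbit n R :=
        Finset.mem_image.mpr ⟨(0, false), Finset.mem_univ _, by simp [d4Act]⟩
      rw [hRQ, ho] at hself
      simpa using hself
    · rintro (rfl | rfl)
      · exact ⟨hQ, rfl⟩
      · exact ⟨hs, by rw [hos, ho]⟩
  have hsum : (Fr n).card = ∑ O ∈ (Fr n).image (fun Q => d4Orbit n Q),
      ((Fr n).filter (fun R => d4Orbit n R = O)).card :=
    Finset.card_eq_sum_card_fiberwise (fun Q hQ => Finset.mem_image_of_mem _ hQ)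
  have h2 : ∀ O ∈ (Fr n).image (fun Q => d4Orbit n Q),
      ((Fr n).filter (fun R => d4Orbit n R = O)).card = 2 := by
    intro O hO
    obtain ⟨Q, hQ, rfl⟩ := Finset.mem_image.mp hO
    rw [fiber_eq Q hQ]
    obtain ⟨_, hne, _, _⟩ := hkey Q hQ
    rw [Finset.card_insert_of_notMem (by simpa using hne.symm),
      Finset.card_singleton]
  have hmain : (Fr n).card = 2 * ((Fr n).image (fun Q => d4Orbit n Q)).card := by
    rw [hsum, Finset.sum_congr rfl h2, Finset.sum_const, smul_eq_mul, Nat.mul_comm]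
  exact ⟨hmain, hcard2, hmain ▸ Nat.dvd_mul_right 2 _⟩
end

section
/- Suppose n ≥ 6 with n ≡ 0 (mod 4) or n ≡ 1 (mod 4). Then for every ℓ ∈ [n], the number of n-queens configurations Q that are fixed by the 90° rotation r and satisfy U_ℓ ⊆ Q is even. -/
open scoped Classical

/-- The border configuration `U_ℓ`: four `r`-symmetric border squares, together with
the center square `((n+1)/2, (n+1)/2)` when `n ≡ 1 (mod 4)`. -/
def borderU (n ℓ : ℕ) : Finset (ℕ × ℕ) :=
  if n % 4 = 0 then
    {(1, ℓ), (ℓ, n), (n, n + 1 - ℓ), (n + 1 - ℓ, 1)}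
  else
    {(1, ℓ), (ℓ, n), (n, n + 1 - ℓ), (n + 1 - ℓ, 1)} ∪ {((n + 1) / 2, (n + 1) / 2)}

/- ## Auxiliary lemmas -/


lemma mem_board_iff {n : ℕ} {p : ℕ × ℕ} :
    p ∈ board n ↔ 1 ≤ p.1 ∧ p.1 ≤ n ∧ 1 ≤ p.2 ∧ p.2 ≤ n := by
  simp only [board, Finset.mem_product, Finset.mem_Icc]
  tauto

/-- A fixed-point-free involution on a finset forces even cardinality. -/
lemma even_card_of_involution {α : Type*} [DecidableEq α] (f : α → α) :
    ∀ S : Finset α, (∀ a ∈ S, f a ∈ S) → (∀ a ∈ S, f (f a) = a) → (∀ a ∈ S, f a ≠ a) →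
      2 ∣ S.card := by
  intro S
  induction S using Finset.strongInductionOn with
  | _ S ih =>
    intro h1 h2 h3
    rcases S.eq_empty_or_nonempty with rfl | ⟨a, ha⟩
    · simp
    · have hfa : f a ∈ S := h1 a ha
      have hne : f a ≠ a := h3 a ha
      have hsub : {a, f a} ⊆ S := by
        intro x hx
        simp only [Finset.mem_insert, Finset.mem_singleton] at hx
        rcases hx with rfl | rfl <;> assumption
      have hpair : ({a, f a} : Finset α).card = 2 := Finset.card_pair (Ne.symm hne)
      have hss : S \ {a, f a} ⊂ S :=
        Finset.sdiff_ssubset hsub ⟨a, by simp⟩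
      have hmem : ∀ b ∈ S \ {a, f a}, f b ∈ S \ {a, f a} := by
        intro b hb
        rw [Finset.mem_sdiff, Finset.mem_insert, Finset.mem_singleton] at hb ⊢
        obtain ⟨hbS, hb2⟩ := hb
        refine ⟨h1 b hbS, fun h => hb2 ?_⟩
        rcases h with h | h
        · exact Or.inr ((h2 b hbS).symm.trans (congrArg f h))
        · exact Or.inl ((h2 b hbS).symm.trans ((congrArg f h).trans (h2 a ha)))
      have hdvd : 2 ∣ (S \ {a, f a}).card :=
        ih _ hss hmem
          (fun b hb => h2 b (Finset.mem_sdiff.mp hb).1)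
          (fun b hb => h3 b (Finset.mem_sdiff.mp hb).1)
      have hcard : (S \ {a, f a}).card = S.card - 2 := by
        rw [Finset.card_sdiff_of_subset hsub, hpair]
      have h2le : 2 ≤ S.card := hpair ▸ Finset.card_le_card hsub
      omega

lemma rpt_mem_borderU {n l : ℕ} (hl2 : l ≤ n) (hmod : n % 4 = 0 ∨ n % 4 = 1)
    {p : ℕ × ℕ} (hp : p ∈ borderU n l) : (n + 1 - p.2, p.1) ∈ borderU n l := by
  unfold borderU at hp ⊢
  split_ifs at hp ⊢ with h4
  · simp only [Finset.mem_insert, Finset.mem_singleton, Prod.ext_iff] at hp ⊢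
    rcases hp with h | h | h | h <;> omega
  · have h1 : n % 4 = 1 := by tauto
    simp only [Finset.mem_union, Finset.mem_insert, Finset.mem_singleton, Prod.ext_iff] at hp ⊢
    rcases hp with (h | h | h | h) | h <;> omega

lemma borderU_subset_board {n l : ℕ} (hl1 : 1 ≤ l) (hl2 : l ≤ n) :
    borderU n l ⊆ board n := by
  intro p hp
  rw [mem_board_iff]
  unfold borderU at hp
  split_ifs at hp <;>
    simp only [Finset.mem_union, Finset.mem_insert, Finset.mem_singleton, Prod.ext_iff] at hp <;>
    omega

lemma rpt_injOn_board {n : ℕ} {p q : ℕ × ℕ} (hp : p ∈ board n) (hq : q ∈ board n)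
    (h : ((n + 1 - p.2, p.1) : ℕ × ℕ) = (n + 1 - q.2, q.1)) : p = q := by
  rw [mem_board_iff] at hp hq
  rw [Prod.ext_iff] at h ⊢
  simp only [Prod.fst, Prod.snd] at h
  omega

lemma rAct_eq_self_of_maps {n : ℕ} {X : Finset (ℕ × ℕ)} (hX : X ⊆ board n)
    (h : ∀ p ∈ X, ((n + 1 - p.2, p.1) : ℕ × ℕ) ∈ X) : rAct n X = X := by
  apply Finset.eq_of_subset_of_card_le
  · intro p hp
    rw [rAct, Finset.mem_image] at hp
    obtain ⟨q, hq, rfl⟩ := hp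
    exact h q hq
  · rw [rAct, Finset.card_image_of_injOn]
    intro p hp q hq hpq
    exact rpt_injOn_board (hX hp) (hX hq) hpq

lemma rAct_borderU {n l : ℕ} (hl1 : 1 ≤ l) (hl2 : l ≤ n) (hmod : n % 4 = 0 ∨ n % 4 = 1) :
    rAct n (borderU n l) = borderU n l :=
  rAct_eq_self_of_maps (borderU_subset_board hl1 hl2)
    (fun _ hp => rpt_mem_borderU hl2 hmod hp)

lemma rAct_union {n : ℕ} (X Y : Finset (ℕ × ℕ)) :
    rAct n (X ∪ Y) = rAct n X ∪ rAct n Y := by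
  simp only [rAct, Finset.image_union]

lemma rAct_sdiff {n : ℕ} {Q U : Finset (ℕ × ℕ)} (hQb : Q ⊆ board n) (hUQ : U ⊆ Q)
    (hfQ : rAct n Q = Q) (hfU : rAct n U = U) : rAct n (Q \ U) = Q \ U := by
  ext p
  simp only [rAct, Finset.mem_image, Finset.mem_sdiff]
  constructor
  · rintro ⟨b, ⟨hbQ, hbU⟩, rfl⟩
    constructor
    · rw [← hfQ, rAct, Finset.mem_image]; exact ⟨b, hbQ, rfl⟩
    · intro hmem
      rw [← hfU, rAct, Finset.mem_image] at hmem
      obtain ⟨u, huU, hu⟩ := hmem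
      exact hbU (rpt_injOn_board (hQb (hUQ huU)) (hQb hbQ) hu ▸ huU)
  · rintro ⟨hpQ, hpU⟩
    rw [← hfQ, rAct, Finset.mem_image] at hpQ
    obtain ⟨b, hbQ, rfl⟩ := hpQ
    refine ⟨b, ⟨hbQ, ?_⟩, rfl⟩
    intro hbU
    apply hpU
    rw [← hfU, rAct, Finset.mem_image]
    exact ⟨b, hbU, rfl⟩

lemma rAct_sAct {n : ℕ} {X : Finset (ℕ × ℕ)} (hX : X ⊆ board n)
    (hfX : rAct n X = X) : rAct n (sAct n X) = sAct n X := by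
  conv_rhs => rw [← hfX, ← hfX, ← hfX]
  simp only [rAct, sAct, Finset.image_image]
  apply Finset.image_congr
  intro p hp
  have hb := mem_board_iff.mp (hX hp)
  simp only [Function.comp_apply, Prod.ext_iff, true_and, and_true]
  omega

lemma sAct_sAct {n : ℕ} {X : Finset (ℕ × ℕ)} (hX : X ⊆ board n) :
    sAct n (sAct n X) = X := by
  simp only [sAct, Finset.image_image]
  have h : Finset.image ((fun p : ℕ × ℕ => (p.1, n + 1 - p.2)) ∘
      (fun p : ℕ × ℕ => (p.1, n + 1 - p.2))) X = Finset.image id X := by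
    apply Finset.image_congr
    intro p hp
    have := mem_board_iff.mp (hX hp)
    simp only [Function.comp_apply, id_eq, Prod.ext_iff, true_and, and_true]
    omega
  rw [h, Finset.image_id]


/-- For `n ≥ 6` with `n ≡ 0` or `1 (mod 4)` and `ℓ ∈ [n]`, the number of `n`-queens
configurations fixed by `r` containing `U_ℓ` is even. -/
theorem even_count_fixed_with_borderU (n : ℕ) (hn : 6 ≤ n)
    (hmod : n % 4 = 0 ∨ n % 4 = 1) (l : ℕ) (hl : l ∈ Finset.Icc 1 n) :
    2 ∣ ((board n).powerset.filter
      (fun Q => IsQueensConfig n Q ∧ rAct n Q = Q ∧ borderU n l ⊆ Q)).card := by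
  obtain ⟨hl1, hl2⟩ := Finset.mem_Icc.mp hl
  set U : Finset (ℕ × ℕ) := borderU n l with hUdef
  have hUb : U ⊆ board n := borderU_subset_board hl1 hl2
  have hU5 : U.card ≤ 5 := by
    have hsub : U ⊆ insert ((1 : ℕ), l) (insert (l, n) (insert (n, n + 1 - l)
        (insert (n + 1 - l, 1) ({((n + 1) / 2, (n + 1) / 2)} : Finset (ℕ × ℕ))))) := by
      rw [hUdef]; unfold borderU; split_ifs
      · intro x hx
        simp only [Finset.mem_insert, Finset.mem_singleton] at hx ⊢
        tauto
      · intro x hx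
        simp only [Finset.mem_union, Finset.mem_insert, Finset.mem_singleton] at hx ⊢
        tauto
    have h1 := Finset.card_insert_le ((1 : ℕ), l) (insert (l, n) (insert (n, n + 1 - l)
        (insert (n + 1 - l, 1) ({((n + 1) / 2, (n + 1) / 2)} : Finset (ℕ × ℕ)))))
    have h2 := Finset.card_insert_le (l, n) (insert (n, n + 1 - l)
        (insert (n + 1 - l, 1) ({((n + 1) / 2, (n + 1) / 2)} : Finset (ℕ × ℕ))))
    have h3 := Finset.card_insert_le (n, n + 1 - l)
        (insert (n + 1 - l, 1) ({((n + 1) / 2, (n + 1) / 2)} : Finset (ℕ × ℕ)))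
    have h4 := Finset.card_insert_le (n + 1 - l, 1) ({((n + 1) / 2, (n + 1) / 2)} : Finset (ℕ × ℕ))
    have h5 : ({((n + 1) / 2, (n + 1) / 2)} : Finset (ℕ × ℕ)).card = 1 := Finset.card_singleton _
    have := Finset.card_le_card hsub
    omega
  apply even_card_of_involution (fun Q => U ∪ sAct n (Q \ U))
  all_goals
    intro Q hQ
    rw [Finset.mem_filter, Finset.mem_powerset] at hQ
    obtain ⟨hQb, ⟨⟨hQb', hcard, hrow, hcol, hdiag, hanti⟩, hfix, hUQ⟩⟩ := hQ
    have hbnd : ∀ x ∈ Q, 1 ≤ x.1 ∧ x.1 ≤ n ∧ 1 ≤ x.2 ∧ x.2 ≤ n :=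
      fun x hx => mem_board_iff.mp (hQb hx)
    have hsfix : ∀ b ∈ Q, b ∉ U → ((b.1, n + 1 - b.2) : ℕ × ℕ) ∈ U → False := by
      intro b hbQ hbU hmem
      have hq : ((b.1, n + 1 - b.2) : ℕ × ℕ) ∈ Q := hUQ hmem
      have := hrow b hbQ _ hq rfl
      rw [← this] at hmem
      exact hbU hmem
    have hdisj : Disjoint U (sAct n (Q \ U)) := by
      rw [Finset.disjoint_right]
      intro x hx hxU
      rw [sAct, Finset.mem_image] at hx
      obtain ⟨b, hb, rfl⟩ := hx
      rw [Finset.mem_sdiff] at hb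
      exact hsfix b hb.1 hb.2 hxU
    have hinjS : Set.InjOn (fun p : ℕ × ℕ => (p.1, n + 1 - p.2)) ↑(Q \ U) := by
      intro a ha b hb hab
      have ha' := hbnd a (Finset.mem_sdiff.mp ha).1
      have hb' := hbnd b (Finset.mem_sdiff.mp hb).1
      rw [Prod.ext_iff] at hab ⊢
      simp only at hab
      omega
    have hcardS : (sAct n (Q \ U)).card = (Q \ U).card := by
      rw [sAct, Finset.card_image_of_injOn hinjS]
    have hcardD : (Q \ U).card = n - U.card := by
      rw [Finset.card_sdiff_of_subset hUQ, hcard]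
    have hDb : Q \ U ⊆ board n := fun x hx => hQb (Finset.mem_sdiff.mp hx).1
  · -- f Q is in the filtered set
    rw [Finset.mem_filter, Finset.mem_powerset]
    have hUcardQ : U.card ≤ n := hcard ▸ Finset.card_le_card hUQ
    have hSb : sAct n (Q \ U) ⊆ board n := by
      intro x hx
      rw [sAct, Finset.mem_image] at hx
      obtain ⟨b, hb, rfl⟩ := hx
      have := hbnd b (Finset.mem_sdiff.mp hb).1
      rw [mem_board_iff]
      constructor
      · exact this.1
      refine ⟨this.2.1, ?_, ?_⟩ <;> simp only <;> omega
    have hb_board : U ∪ sAct n (Q \ U) ⊆ board n := Finset.union_subset hUb hSb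
    have hmix : ∀ p ∈ U, ∀ b ∈ Q, b ∉ U →
        p.1 ≠ b.1 ∧ p.2 ≠ n + 1 - b.2 ∧
        p.2 + n - p.1 ≠ (n + 1 - b.2) + n - b.1 ∧
        p.1 + p.2 - 1 ≠ b.1 + (n + 1 - b.2) - 1 := by
      intro p hpU b hbQ hbU
      have hpQ : p ∈ Q := hUQ hpU
      have hpb := hbnd p hpQ
      have hbb := hbnd b hbQ
      have h1 : ((n + 1 - p.2, p.1) : ℕ × ℕ) ∈ U := rpt_mem_borderU hl2 hmod hpU
      have h2 : ((n + 1 - p.1, n + 1 - p.2) : ℕ × ℕ) ∈ U := rpt_mem_borderU hl2 hmod h1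
      have h3 : ((n + 1 - (n + 1 - p.2), n + 1 - p.1) : ℕ × ℕ) ∈ U := rpt_mem_borderU hl2 hmod h2
      refine ⟨?_, ?_, ?_, ?_⟩
      · intro h
        exact hbU ((hrow p hpQ b hbQ h) ▸ hpU)
      · intro h
        have heq := hcol b hbQ _ (hUQ h2) (show b.2 = n + 1 - p.2 by omega)
        rw [heq] at hbU; exact hbU h2
      · intro h
        have heq := hanti b hbQ _ (hUQ h1) (show b.1 + b.2 - 1 = (n + 1 - p.2) + p.1 - 1 by omega)
        rw [heq] at hbU; exact hbU h1
      · intro h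
        have heq := hdiag b hbQ _ (hUQ h3)
          (show b.2 + n - b.1 = (n + 1 - p.1) + n - (n + 1 - (n + 1 - p.2)) by omega)
        rw [heq] at hbU; exact hbU h3
    refine ⟨hb_board, ⟨hb_board, ?_, ?_, ?_, ?_, ?_⟩, ?_, Finset.subset_union_left⟩
    · -- cardinality
      rw [Finset.card_union_of_disjoint hdisj, hcardS, hcardD]
      omega
    · -- rows
      intro p hp q hq hrel
      rw [Finset.mem_union] at hp hq
      rcases hp with hpU | hpS <;> rcases hq with hqU | hqS
      · exact hrow p (hUQ hpU) q (hUQ hqU) hrel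
      · rw [sAct, Finset.mem_image] at hqS
        obtain ⟨b, hb, rfl⟩ := hqS
        rw [Finset.mem_sdiff] at hb
        exact absurd hrel (hmix p hpU b hb.1 hb.2).1
      · rw [sAct, Finset.mem_image] at hpS
        obtain ⟨b, hb, rfl⟩ := hpS
        rw [Finset.mem_sdiff] at hb
        exact absurd hrel.symm (hmix q hqU b hb.1 hb.2).1
      · rw [sAct, Finset.mem_image] at hpS hqS
        obtain ⟨a, ha, rfl⟩ := hpS
        obtain ⟨b, hb, rfl⟩ := hqS
        rw [Finset.mem_sdiff] at ha hb
        rw [hrow a ha.1 b hb.1 hrel]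
    · -- columns
      intro p hp q hq hrel
      rw [Finset.mem_union] at hp hq
      rcases hp with hpU | hpS <;> rcases hq with hqU | hqS
      · exact hcol p (hUQ hpU) q (hUQ hqU) hrel
      · rw [sAct, Finset.mem_image] at hqS
        obtain ⟨b, hb, rfl⟩ := hqS
        rw [Finset.mem_sdiff] at hb
        exact absurd hrel (hmix p hpU b hb.1 hb.2).2.1
      · rw [sAct, Finset.mem_image] at hpS
        obtain ⟨b, hb, rfl⟩ := hpS
        rw [Finset.mem_sdiff] at hb
        exact absurd hrel.symm (hmix q hqU b hb.1 hb.2).2.1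
      · rw [sAct, Finset.mem_image] at hpS hqS
        obtain ⟨a, ha, rfl⟩ := hpS
        obtain ⟨b, hb, rfl⟩ := hqS
        rw [Finset.mem_sdiff] at ha hb
        have haa := hbnd a ha.1
        have hbb := hbnd b hb.1
        have : a.2 = b.2 := by
          have hrel' : n + 1 - a.2 = n + 1 - b.2 := hrel
          omega
        rw [hcol a ha.1 b hb.1 this]
    · -- diagonals
      intro p hp q hq hrel
      rw [Finset.mem_union] at hp hq
      rcases hp with hpU | hpS <;> rcases hq with hqU | hqS
      · exact hdiag p (hUQ hpU) q (hUQ hqU) hrel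
      · rw [sAct, Finset.mem_image] at hqS
        obtain ⟨b, hb, rfl⟩ := hqS
        rw [Finset.mem_sdiff] at hb
        exact absurd hrel (hmix p hpU b hb.1 hb.2).2.2.1
      · rw [sAct, Finset.mem_image] at hpS
        obtain ⟨b, hb, rfl⟩ := hpS
        rw [Finset.mem_sdiff] at hb
        exact absurd hrel.symm (hmix q hqU b hb.1 hb.2).2.2.1
      · rw [sAct, Finset.mem_image] at hpS hqS
        obtain ⟨a, ha, rfl⟩ := hpS
        obtain ⟨b, hb, rfl⟩ := hqS
        rw [Finset.mem_sdiff] at ha hb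
        have haa := hbnd a ha.1
        have hbb := hbnd b hb.1
        have : a.1 + a.2 - 1 = b.1 + b.2 - 1 := by
          have hrel' : (n + 1 - a.2) + n - a.1 = (n + 1 - b.2) + n - b.1 := hrel
          omega
        rw [hanti a ha.1 b hb.1 this]
    · -- anti-diagonals
      intro p hp q hq hrel
      rw [Finset.mem_union] at hp hq
      rcases hp with hpU | hpS <;> rcases hq with hqU | hqS
      · exact hanti p (hUQ hpU) q (hUQ hqU) hrel
      · rw [sAct, Finset.mem_image] at hqS
        obtain ⟨b, hb, rfl⟩ := hqS
        rw [Finset.mem_sdiff] at hb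
        exact absurd hrel (hmix p hpU b hb.1 hb.2).2.2.2
      · rw [sAct, Finset.mem_image] at hpS
        obtain ⟨b, hb, rfl⟩ := hpS
        rw [Finset.mem_sdiff] at hb
        exact absurd hrel.symm (hmix q hqU b hb.1 hb.2).2.2.2
      · rw [sAct, Finset.mem_image] at hpS hqS
        obtain ⟨a, ha, rfl⟩ := hpS
        obtain ⟨b, hb, rfl⟩ := hqS
        rw [Finset.mem_sdiff] at ha hb
        have haa := hbnd a ha.1
        have hbb := hbnd b hb.1
        have : a.2 + n - a.1 = b.2 + n - b.1 := by
          have hrel' : a.1 + (n + 1 - a.2) - 1 = b.1 + (n + 1 - b.2) - 1 := hrel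
          omega
        rw [hdiag a ha.1 b hb.1 this]
    · -- r-fixedness
      have hDfix : rAct n (Q \ U) = Q \ U :=
        rAct_sdiff hQb hUQ hfix (rAct_borderU hl1 hl2 hmod)
      rw [rAct_union, rAct_borderU hl1 hl2 hmod, rAct_sAct hDb hDfix]
  · -- involution
    show U ∪ sAct n ((U ∪ sAct n (Q \ U)) \ U) = Q
    rw [Finset.union_sdiff_cancel_left hdisj, sAct_sAct hDb,
      Finset.union_sdiff_of_subset hUQ]
  · -- no fixed point
    show U ∪ sAct n (Q \ U) ≠ Q
    intro hfixQ
    have hSsub : sAct n (Q \ U) ⊆ Q \ U := by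
      intro x hx
      rw [Finset.mem_sdiff]
      constructor
      · rw [← hfixQ]; exact Finset.mem_union_right _ hx
      · exact fun hxU => Finset.disjoint_left.mp hdisj hxU hx
    have hSeq : sAct n (Q \ U) = Q \ U :=
      Finset.eq_of_subset_of_card_le hSsub (le_of_eq hcardS.symm)
    have hUcardQ : U.card ≤ n := hcard ▸ Finset.card_le_card hUQ
    have hfixpt : ∀ c ∈ Q \ U, 2 * c.2 = n + 1 := by
      intro c hc
      have hcs : ((c.1, n + 1 - c.2) : ℕ × ℕ) ∈ Q \ U := by
        rw [← hSeq, sAct, Finset.mem_image]; exact ⟨c, hc, rfl⟩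
      have hcQ := (Finset.mem_sdiff.mp hc).1
      have hceq := hrow c hcQ _ (Finset.mem_sdiff.mp hcs).1 rfl
      have hcb := hbnd c hcQ
      rw [Prod.ext_iff] at hceq
      have : c.2 = n + 1 - c.2 := hceq.2
      omega
    obtain ⟨a, ha, b, hb, hab⟩ := Finset.one_lt_card.mp (by omega : 1 < (Q \ U).card)
    have h2a := hfixpt a ha
    have h2b := hfixpt b hb
    exact hab (hcol a (Finset.mem_sdiff.mp ha).1 b (Finset.mem_sdiff.mp hb).1 (by omega))
end
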